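/- For every integer n ≥ 0, the number of vectors p ∈ ℤ⁶ with |p_i| ≤ n for all i and p_1+⋯+p_6 even equals 32n⁶ + 96n⁵ + 120n⁴ + 80n³ + 30n² + 6n + 1; moreover, for every integer n ≥ 1, the number of vectors p ∈ ℤ⁶ with max_i |p_i| = n and even coordinate sum equals 4n(1+12n²)(3+4n²). -/

import Mathlib

/-- `D6b n` : the number of vectors `p ∈ ℤ⁶` with `|p i| ≤ n` for all `i`
and even coordinate sum (bulk count for the `D₆` lattice). -/
noncomputable def D6b (n : ℕ) : ℕ :=
  Nat.card {p : Fin 6 → ℤ // (∀ i, |p i| ≤ (n : ℤ)) ∧ Even (∑ i, p i)}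

/-- `D6s n` : the number of vectors `p ∈ ℤ⁶` with `max_i |p i| = n`
and even coordinate sum (surface count for the `D₆` lattice). -/
noncomputable def D6s (n : ℕ) : ℕ :=
  Nat.card {p : Fin 6 → ℤ //
    (∀ i, |p i| ≤ (n : ℤ)) ∧ (∃ i, |p i| = (n : ℤ)) ∧ Even (∑ i, p i)}

/-!
Weighting each point `p` of the cube `[-n, n]⁶` by the sign `(-1)^(p₁ + ⋯ + p₆)`, the weighted
count factors as `(∑_{|x| ≤ n} (-1)^x)⁶ = ((-1)^n)⁶ = 1`, while the unweighted count is
`(2n + 1)⁶`. Hence the cube contains `((2n + 1)⁶ + 1) / 2` points of even coordinate sum, and the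
surface count is the difference of two consecutive bulk counts.
-/

open Finset

theorem Int.negOnePow_sum {ι : Type*} (s : Finset ι) (f : ι → ℤ) :
    (∑ i ∈ s, f i).negOnePow = ∏ i ∈ s, (f i).negOnePow := by
  classical
  induction s using Finset.induction_on with
  | empty => simp
  | insert a s ha ih => rw [sum_insert ha, prod_insert ha, Int.negOnePow_add, ih]

theorem Int.sum_Icc_negOnePow (n : ℕ) :
    ∑ x ∈ Icc (-(n : ℤ)) n, (x.negOnePow : ℤ) = (n : ℤ).negOnePow := by
  induction n with
  | zero => simp
  | succ n ih =>
    have hIcc : Icc (-((n + 1 : ℕ) : ℤ)) (n + 1 : ℕ) =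
        insert (-((n + 1 : ℕ) : ℤ)) (insert ((n + 1 : ℕ) : ℤ) (Icc (-(n : ℤ)) n)) := by
      ext x; simp only [mem_Icc, mem_insert]; omega
    rw [hIcc, sum_insert (by simp; omega), sum_insert (by simp), ih, Int.negOnePow_neg]
    push_cast
    simp [Int.negOnePow_succ]

theorem Int.negOnePow_eq_two_mul_ite_sub_one (x : ℤ) :
    (x.negOnePow : ℤ) = 2 * (if Even x then 1 else 0) - 1 := by
  rcases Int.even_or_odd x with h | h
  · simp [Int.negOnePow_even x h, h]
  · simp [Int.negOnePow_odd x h, Int.not_even_iff_odd.2 h]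

theorem two_mul_card_filter_even_sum {ι : Type*} [Fintype ι] [DecidableEq ι]
    (s : ι → Finset ℤ) :
    (2 * #{p ∈ Fintype.piFinset s | Even (∑ i, p i)} : ℤ) =
      ∏ i, (#(s i) : ℤ) + ∏ i, ∑ x ∈ s i, (x.negOnePow : ℤ) := by
  have hchar : ∑ p ∈ Fintype.piFinset s, ((∑ i, p i).negOnePow : ℤ) =
      ∏ i, ∑ x ∈ s i, (x.negOnePow : ℤ) := by
    simp only [Int.negOnePow_sum, Units.coe_prod, prod_univ_sum]
  have hcount : ∑ p ∈ Fintype.piFinset s, ((∑ i, p i).negOnePow : ℤ) =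
      2 * #{p ∈ Fintype.piFinset s | Even (∑ i, p i)} - ∏ i, (#(s i) : ℤ) := by
    simp only [Int.negOnePow_eq_two_mul_ite_sub_one, sum_sub_distrib, ← mul_sum, sum_boole,
      sum_const, Fintype.card_piFinset, nsmul_eq_mul, mul_one]
    push_cast; ring
  linarith

noncomputable def evenBox (ι : Type*) [Fintype ι] [DecidableEq ι] (n : ℕ) : Finset (ι → ℤ) :=
  {p ∈ Fintype.piFinset fun _ => Icc (-(n : ℤ)) n | Even (∑ i, p i)}

section evenBox

variable {ι : Type*} [Fintype ι] [DecidableEq ι]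

theorem mem_evenBox {n : ℕ} {p : ι → ℤ} :
    p ∈ evenBox ι n ↔ (∀ i, |p i| ≤ n) ∧ Even (∑ i, p i) := by
  simp only [evenBox, mem_filter, Fintype.mem_piFinset, mem_Icc, abs_le]

theorem evenBox_mono : Monotone (evenBox ι) := by
  intro m n hmn p
  simp only [mem_evenBox]
  exact fun ⟨hp, heven⟩ ↦ ⟨fun i ↦ (hp i).trans (by exact_mod_cast hmn), heven⟩

theorem mem_evenBox_succ_sdiff {n : ℕ} {p : ι → ℤ} :
    p ∈ evenBox ι (n + 1) \ evenBox ι n ↔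
      (∀ i, |p i| ≤ (n + 1 : ℕ)) ∧ (∃ i, |p i| = (n + 1 : ℕ)) ∧ Even (∑ i, p i) := by
  simp only [mem_sdiff, mem_evenBox, not_and', not_forall, not_le]
  push_cast
  constructor
  · rintro ⟨⟨hp, heven⟩, hout⟩
    obtain ⟨i, hi⟩ := hout heven
    exact ⟨hp, ⟨i, le_antisymm (hp i) (by omega)⟩, heven⟩
  · rintro ⟨hp, ⟨i, hi⟩, heven⟩
    exact ⟨⟨hp, heven⟩, fun _ ↦ ⟨i, by omega⟩⟩

theorem two_mul_card_evenBox (n : ℕ) :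
    (2 * #(evenBox ι n) : ℤ) =
      (2 * n + 1) ^ Fintype.card ι + ((n : ℤ).negOnePow : ℤ) ^ Fintype.card ι := by
  rw [evenBox, two_mul_card_filter_even_sum, Int.sum_Icc_negOnePow, Int.card_Icc]
  simp only [prod_const, card_univ]
  congr 2
  omega

end evenBox

theorem D6b_eq_card_evenBox (n : ℕ) : D6b n = #(evenBox (Fin 6) n) := by
  simp_rw [D6b, ← mem_evenBox]
  exact Nat.card_eq_finsetCard _

theorem D6s_succ_add_D6b (n : ℕ) : D6s (n + 1) + D6b n = D6b (n + 1) := by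
  have hsurface : D6s (n + 1) = #(evenBox (Fin 6) (n + 1) \ evenBox (Fin 6) n) := by
    simp_rw [D6s, ← mem_evenBox_succ_sdiff]
    exact Nat.card_eq_finsetCard _
  rw [hsurface, D6b_eq_card_evenBox, D6b_eq_card_evenBox,
    card_sdiff_add_card_eq_card (evenBox_mono n.le_succ)]

theorem D6b_eq (n : ℕ) :
    D6b n = 32 * n ^ 6 + 96 * n ^ 5 + 120 * n ^ 4 + 80 * n ^ 3 + 30 * n ^ 2 + 6 * n + 1 := by
  have hsign : ((n : ℤ).negOnePow : ℤ) ^ 6 = 1 := by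
    rw [← Units.val_pow_eq_pow_val, pow_mul' _ 2 3, Int.units_sq, Units.val_one]
  have h := two_mul_card_evenBox (ι := Fin 6) n
  rw [Fintype.card_fin, hsign] at h
  rw [D6b_eq_card_evenBox]
  zify
  linarith

theorem D6_bulk_surface :
    (∀ n : ℕ, D6b n = 32 * n ^ 6 + 96 * n ^ 5 + 120 * n ^ 4 + 80 * n ^ 3
      + 30 * n ^ 2 + 6 * n + 1) ∧
    (∀ n : ℕ, 1 ≤ n → D6s n = 4 * n * (1 + 12 * n ^ 2) * (3 + 4 * n ^ 2)) := by
  refine ⟨D6b_eq, fun n hn ↦ ?_⟩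
  obtain ⟨m, rfl⟩ := Nat.exists_eq_add_of_le' hn
  have h := D6s_succ_add_D6b m
  rw [D6b_eq, D6b_eq] at h
  zify at h ⊢
  linear_combination h
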